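/- Let M(−n−2) be the Verma module over U_q(sl_2) with highest weight vector m₀ of weight −n−2 (n ∈ ℤ⁺), and let D(M) = ⊕_{k ∈ ℤ} ℚ(q)·f^k m₀ be Deodhar's localization, a U_q(sl_2)-module extending the action on M(−n−2), with e-action determined by the commutation relations. Then for k > 0, the vector f^{−k}m₀ is annihilated by some power of e if and only if k < n + 2. Consequently the e-locally-finite part of D(M) equals ⊕_{k ≥ −n−1} ℚ(q)·f^k m₀. -/
import Mathlib


open Polynomial

noncomputable section

abbrev K : Type := RatFunc ℚ

def q : K := RatFunc.X

/-- The subring `𝔸 ⊂ ℚ(q)` of rational functions regular at `q = 0`. -/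
def 𝔸 : Subring K where
  carrier := {x : K | x.denom.eval 0 ≠ 0}
  zero_mem' := by simp [RatFunc.denom_zero]
  one_mem' := by simp [RatFunc.denom_one]
  add_mem' := by
    intro x y hx hy
    obtain ⟨c, hc⟩ := RatFunc.denom_add_dvd x y
    simp only [Set.mem_setOf_eq] at *
    intro h0
    exact mul_ne_zero hx hy (by
      rw [← Polynomial.eval_mul, hc, Polynomial.eval_mul, h0, zero_mul])
  mul_mem' := by
    intro x y hx hy
    obtain ⟨c, hc⟩ := RatFunc.denom_mul_dvd x y
    simp only [Set.mem_setOf_eq] at *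
    intro h0
    exact mul_ne_zero hx hy (by
      rw [← Polynomial.eval_mul, hc, Polynomial.eval_mul, h0, zero_mul])
  neg_mem' := by
    intro x hx
    have hneg : (-x) = (-1 : K) * x := by ring
    obtain ⟨c, hc⟩ := RatFunc.denom_mul_dvd (-1 : K) x
    rw [← hneg] at hc
    have hd1 : (-1 : K).denom = 1 := by
      have := RatFunc.denom_algebraMap (-1 : Polynomial ℚ)
      simpa using this
    rw [hd1, one_mul] at hc
    simp only [Set.mem_setOf_eq] at *
    intro h0
    exact hx (by
      rw [hc, Polynomial.eval_mul, h0, zero_mul])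

/-- Quantum integer `[k] = (q^k - q^{-k})/(q - q⁻¹)`. -/
def qint (k : ℤ) : K := (q ^ k - q ^ (-k)) / (q - q⁻¹)

/-- Quantum factorial `[n]! = [1][2]⋯[n]`. -/
def qfac : ℕ → K
  | 0 => 1
  | n + 1 => qfac n * qint (n + 1)

/-- Quantum binomial coefficient. -/
def qbinom (m n : ℕ) : K := qfac m / (qfac n * qfac (m - n))

end

noncomputable section

/-- Deodhar's localization `D(M)` of the Verma module `M(−n−2)`:
`ℚ(q)`-vector space with basis `w k = f^k m₀`, `k ∈ ℤ` (`f` acts bijectively). -/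
abbrev DM : Type := ℤ →₀ K

def w (k : ℤ) : DM := Finsupp.single k 1

/-- The action of `e` on `D(M)`, determined by the commutation relations:
`e·f^k m₀ = [k]·[−n−1−k]·f^{k−1} m₀` (highest weight `−n−2`). -/
def Eop (n : ℕ) : DM →ₗ[K] DM :=
  Finsupp.lsum K fun k =>
    LinearMap.toSpanSingleton K DM ((qint k * qint (-(n : ℤ) - 1 - k)) • w (k - 1))

lemma q_ne_zero : q ≠ 0 := RatFunc.X_ne_zero

lemma intDegree_q_pow (m : ℕ) : (q ^ m : K).intDegree = m := by
  induction m with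
  | zero => simpa using RatFunc.intDegree_one
  | succ m ih =>
    rw [pow_succ, RatFunc.intDegree_mul (pow_ne_zero _ q_ne_zero) q_ne_zero, ih]
    simp [q, RatFunc.intDegree_X]

lemma intDegree_inv (x : K) (hx : x ≠ 0) : x⁻¹.intDegree = -x.intDegree := by
  have h := RatFunc.intDegree_mul hx (inv_ne_zero hx)
  rw [mul_inv_cancel₀ hx, RatFunc.intDegree_one] at h
  linarith

lemma intDegree_q_zpow (k : ℤ) : (q ^ k : K).intDegree = k := by
  cases k with
  | ofNat m => rw [Int.ofNat_eq_coe, zpow_natCast, intDegree_q_pow]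
  | negSucc m =>
    rw [zpow_negSucc, intDegree_inv _ (pow_ne_zero _ q_ne_zero), intDegree_q_pow]
    simp [Int.negSucc_eq]

lemma qsub_ne_zero : q - q⁻¹ ≠ 0 := by
  intro h
  have hq : q = q⁻¹ := sub_eq_zero.mp h
  have h1 : (q : K).intDegree = 1 := RatFunc.intDegree_X
  have h2 : (q⁻¹ : K).intDegree = -1 := by rw [intDegree_inv _ q_ne_zero, h1]
  rw [hq, h2] at h1; norm_num at h1

lemma qint_zero : qint 0 = 0 := by simp [qint]

lemma qint_eq_zero_iff (k : ℤ) : qint k = 0 ↔ k = 0 := by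
  constructor
  · intro h
    rw [qint, _root_.div_eq_zero_iff] at h
    rcases h with h | h
    · have : (q : K) ^ k = q ^ (-k) := sub_eq_zero.mp h
      have := congrArg RatFunc.intDegree this
      rw [intDegree_q_zpow, intDegree_q_zpow] at this
      omega
    · exact absurd h qsub_ne_zero
  · rintro rfl; exact qint_zero

/-- coefficient -/
def cc (n : ℕ) (j : ℤ) : K := qint j * qint (-(n : ℤ) - 1 - j)

lemma cc_eq_zero_iff (n : ℕ) (j : ℤ) : cc n j = 0 ↔ j = 0 ∨ j = -(n : ℤ) - 1 := by
  rw [cc, mul_eq_zero, qint_eq_zero_iff, qint_eq_zero_iff]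
  constructor
  · rintro (h | h); · exact Or.inl h
    · right; omega
  · rintro (h | h); · exact Or.inl h
    · right; omega

lemma Eop_apply (n : ℕ) (x : DM) (j : ℤ) :
    (Eop n x) (j - 1) = cc n j * x j := by
  classical
  rw [Eop, Finsupp.lsum_apply, Finsupp.sum_apply]
  rw [Finsupp.sum]
  rw [Finset.sum_eq_single j]
  · simp [LinearMap.toSpanSingleton_apply, w, cc, Finsupp.smul_single, mul_comm]
  · intro b _ hb
    simp [LinearMap.toSpanSingleton_apply, w, Finsupp.smul_single,
      Finsupp.single_apply, sub_left_inj, hb]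
  · intro hj
    simp [Finsupp.notMem_support_iff.mp hj]

lemma Eop_pow_apply (n : ℕ) (m : ℕ) (x : DM) (j : ℤ) :
    ((Eop n ^ m) x) (j - m) = (∏ i ∈ Finset.range m, cc n (j - i)) * x j := by
  induction m generalizing x j with
  | zero => simp
  | succ m ih =>
    have h1 : (Eop n ^ (m + 1)) x = (Eop n ^ m) (Eop n x) := by
      rw [pow_succ]; rfl
    have h2 : j - (m + 1 : ℕ) = (j - 1) - m := by push_cast; ring
    rw [h1, h2, ih (Eop n x) (j - 1), Eop_apply n x j]
    rw [Finset.prod_range_succ']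
    have h3 : (∏ i ∈ Finset.range m, cc n (j - 1 - (i : ℤ)))
        = ∏ i ∈ Finset.range m, cc n (j - ((i + 1 : ℕ) : ℤ)) := by
      refine Finset.prod_congr rfl fun i _ => ?_
      congr 1; push_cast; ring
    rw [h3, mul_assoc]; norm_num

lemma Eop_pow_apply' (n : ℕ) (m : ℕ) (x : DM) (t : ℤ) :
    ((Eop n ^ m) x) t = (∏ i ∈ Finset.range m, cc n (t + m - i)) * x (t + m) := by
  have h := Eop_pow_apply n m x (t + m)
  simpa using h

/-- For `k > 0`, `f^{−k}m₀` is annihilated by a power of `e` iff `k < n + 2`;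
consequently the `e`-locally-finite part of `D(M)` is `⊕_{k ≥ −n−1} ℚ(q)·f^k m₀`. -/
theorem deodhar_locally_finite_part (n : ℕ) :
    (∀ k : ℤ, 0 < k →
      ((∃ m : ℕ, (Eop n ^ m) (w (-k)) = 0) ↔ k < (n : ℤ) + 2)) ∧
    {x : DM | ∃ m : ℕ, (Eop n ^ m) x = 0} =
      ↑(Submodule.span K {x : DM | ∃ k : ℤ, -(n : ℤ) - 1 ≤ k ∧ x = w k}) := by
  constructor
  · intro k hk
    constructor
    · rintro ⟨m, hm⟩
      have h := congrArg (fun y : DM => y (-k - m)) hm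
      simp only [Finsupp.coe_zero, Pi.zero_apply] at h
      rw [Eop_pow_apply'] at h
      have e1 : -k - (m : ℤ) + m = -k := by ring
      rw [e1] at h
      have hw : w (-k) (-k) = 1 := by simp [w]
      rw [hw, mul_one] at h
      obtain ⟨i, hi, hci⟩ := Finset.prod_eq_zero_iff.mp h
      rw [cc_eq_zero_iff] at hci
      have hi' := Finset.mem_range.mp hi
      omega
    · intro hkn
      refine ⟨(n + 2 - k).toNat, ?_⟩
      ext t
      rw [Eop_pow_apply']
      set m : ℕ := (n + 2 - k).toNat with hm
      by_cases hc : t + (m : ℤ) = -k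
      · have himem : ((n : ℤ) + 1 - k).toNat ∈ Finset.range m := by
          rw [Finset.mem_range]; omega
        have hz : cc n (t + (m : ℤ) - (((n : ℤ) + 1 - k).toNat : ℤ)) = 0 := by
          rw [cc_eq_zero_iff]; right; omega
        rw [Finset.prod_eq_zero himem hz, zero_mul]
        simp
      · have hw0 : w (-k) (t + (m : ℤ)) = 0 := by
          simp only [w, Finsupp.single_apply]
          rw [if_neg]; omega
        rw [hw0, mul_zero]
        simp
  · have hset : {x : DM | ∃ k : ℤ, -(n : ℤ) - 1 ≤ k ∧ x = w k}
        = (fun k => Finsupp.single k (1 : K)) '' {k : ℤ | -(n : ℤ) - 1 ≤ k} := by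
      ext x
      constructor
      · rintro ⟨k, hk, rfl⟩; exact ⟨k, hk, rfl⟩
      · rintro ⟨k, hk, rfl⟩; exact ⟨k, hk, rfl⟩
    rw [hset, ← Finsupp.supported_eq_span_single]
    ext x
    simp only [Set.mem_setOf_eq, SetLike.mem_coe, Finsupp.mem_supported]
    constructor
    · rintro ⟨m, hm⟩ j hj
      have hx : x j ≠ 0 := Finsupp.mem_support_iff.mp hj
      have h := congrArg (fun y : DM => y (j - m)) hm
      simp only [Finsupp.coe_zero, Pi.zero_apply] at h
      rw [Eop_pow_apply'] at h
      have e1 : j - (m : ℤ) + m = j := by ring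
      rw [e1] at h
      rcases mul_eq_zero.mp h with h0 | h0
      · obtain ⟨i, hi, hci⟩ := Finset.prod_eq_zero_iff.mp h0
        rw [cc_eq_zero_iff] at hci
        have hi' := Finset.mem_range.mp hi
        show -(n : ℤ) - 1 ≤ j
        omega
      · exact absurd h0 hx
    · intro hsupp
      refine ⟨x.support.sup (fun j : ℤ => (j + (n : ℤ) + 2).toNat), ?_⟩
      set m : ℕ := x.support.sup (fun j : ℤ => (j + (n : ℤ) + 2).toNat) with hmdef
      ext t
      rw [Eop_pow_apply']
      by_cases hmem : (t + (m : ℤ)) ∈ x.support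
      · have hj : -(n : ℤ) - 1 ≤ t + m := hsupp hmem
        have hle : (t + (m : ℤ) + n + 2).toNat ≤ m :=
          Finset.le_sup (f := fun j : ℤ => (j + (n : ℤ) + 2).toNat) hmem
        have himem : ((t + (m : ℤ) + n + 1).toNat) ∈ Finset.range m := by
          rw [Finset.mem_range]; omega
        have hz : cc n (t + (m : ℤ) - ((t + (m : ℤ) + n + 1).toNat : ℤ)) = 0 := by
          rw [cc_eq_zero_iff]; right; omega
        rw [Finset.prod_eq_zero himem hz, zero_mul]
        simp
      · rw [Finsupp.notMem_support_iff.mp hmem, mul_zero]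
        simp

end
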